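/- For every t > 0 and all x, y ∈ [0, L], the Neumann heat kernel dominates the Gaussian heat kernel: p_N(t,x,y) ≥ p(t,x,y). -/

import Mathlib

open MeasureTheory Real

/-- The Gaussian heat kernel on ℝ. -/
noncomputable def gaussKernel (t x y : ℝ) : ℝ :=
  (2 * Real.pi * t) ^ (-(1:ℝ)/2) * Real.exp (-(x - y)^2 / (2*t))

/-- The Neumann heat kernel on `[0,L]`. -/
noncomputable def neumannKernel (L t x y : ℝ) : ℝ :=
  1 / L + (2 / L) * ∑' n : ℕ,
    Real.exp (-((n:ℝ)+1)^2 * Real.pi^2 * t / (2*L^2)) *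
      Real.cos (((n:ℝ)+1) * Real.pi * x / L) * Real.cos (((n:ℝ)+1) * Real.pi * y / L)

/-!
Method of images: by Poisson summation (the functional equation of the Jacobi theta function),
the `2L`-periodisation of the Gaussian kernel is the cosine series `cosKernel`, and the product
formula `2 cos A cos B = cos (A - B) + cos (A + B)` writes the Neumann kernel as
`∑ₙ p(t, x - y + 2nL) + p(t, x + y + 2nL)`. The term `n = 0` of the first sum is `p(t, x, y)`
and all other terms are nonnegative.
-/

open HurwitzZeta

lemma gaussKernel_nonneg {t : ℝ} (ht : 0 ≤ t) (x y : ℝ) : 0 ≤ gaussKernel t x y := by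
  unfold gaussKernel
  positivity

theorem hasSum_gaussKernel_add_int_mul {t P : ℝ} (ht : 0 < t) (hP : 0 < P) (u : ℝ) :
    HasSum (fun n : ℤ ↦ gaussKernel t (u + n * P) 0)
      (cosKernel (u / P) (2 * π * t / P ^ 2) / P) := by
  have hτ : 0 < P ^ 2 / (2 * π * t) := by positivity
  have hterm (n : ℤ) : gaussKernel t (u + n * P) 0 =
      (2 * π * t) ^ (-(1:ℝ)/2) * rexp (-π * (n + u / P) ^ 2 * (P ^ 2 / (2 * π * t))) := by
    simp only [gaussKernel, sub_zero]
    congr 2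
    field_simp
    ring
  have hconst :
      (2 * π * t) ^ (-(1:ℝ)/2) * (1 / (P ^ 2 / (2 * π * t)) ^ (1 / 2 : ℝ)) = 1 / P := by
    rw [one_div ((_ : ℝ) ^ _), ← rpow_neg hτ.le, neg_div, ← mul_rpow (by positivity) hτ.le,
      mul_div_cancel₀ _ (by positivity), rpow_neg (sq_nonneg P), ← sqrt_eq_rpow, sqrt_sq hP.le,
      one_div]
  have h := (hasSum_int_evenKernel (u / P) hτ).mul_left ((2 * π * t) ^ (-(1:ℝ)/2))
  rwa [evenKernel_functional_equation, ← mul_assoc, hconst, one_div_div, one_div_mul_eq_div,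
    ← funext hterm] at h

theorem neumannKernel_eq_cosKernel {L t : ℝ} (hL : L ≠ 0) (ht : 0 < t) (x y : ℝ) :
    neumannKernel L t x y =
      (cosKernel ((x - y) / (2 * L)) (2 * π * t / (2 * L) ^ 2) +
        cosKernel ((x + y) / (2 * L)) (2 * π * t / (2 * L) ^ 2)) / (2 * L) := by
  set s := 2 * π * t / (2 * L) ^ 2 with hs_def
  have hs : 0 < s := by positivity
  have h := (hasSum_nat_cosKernel₀ ((x - y) / (2 * L)) hs).add
    (hasSum_nat_cosKernel₀ ((x + y) / (2 * L)) hs)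
  have hterm (n : ℕ) :
      2 * cos (2 * π * ((x - y) / (2 * L)) * (n + 1)) * rexp (-π * (n + 1) ^ 2 * s) +
        2 * cos (2 * π * ((x + y) / (2 * L)) * (n + 1)) * rexp (-π * (n + 1) ^ 2 * s) =
      4 * (rexp (-((n:ℝ) + 1) ^ 2 * π ^ 2 * t / (2 * L ^ 2)) *
        cos ((n + 1) * π * x / L) * cos ((n + 1) * π * y / L)) := by
    have hsub : 2 * π * ((x - y) / (2 * L)) * (n + 1) =
        (n + 1) * π * x / L - (n + 1) * π * y / L := by
      field_simp
    have hadd : 2 * π * ((x + y) / (2 * L)) * (n + 1) =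
        (n + 1) * π * x / L + (n + 1) * π * y / L := by
      field_simp
    have hexp : -π * (n + 1) ^ 2 * s = -((n:ℝ) + 1) ^ 2 * π ^ 2 * t / (2 * L ^ 2) := by
      rw [hs_def]
      field_simp
    rw [hsub, hadd, hexp, cos_sub, cos_add]
    ring
  simp_rw [hterm] at h
  have hsum := h.tsum_eq
  rw [tsum_mul_left, mul_comm] at hsum
  rw [neumannKernel, eq_div_of_mul_eq four_ne_zero hsum]
  field_simp
  ring

theorem gaussKernel_le_neumannKernel_general (L : ℝ) (hL : 0 < L) (t x y : ℝ) (ht : 0 < t) :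
    gaussKernel t x y ≤ neumannKernel L t x y := by
  have hP : 0 < 2 * L := by positivity
  have hdirect : gaussKernel t x y ≤
      cosKernel ((x - y) / (2 * L)) (2 * π * t / (2 * L) ^ 2) / (2 * L) := by
    simpa [gaussKernel] using le_hasSum (hasSum_gaussKernel_add_int_mul ht hP (x - y)) 0
      fun n _ ↦ gaussKernel_nonneg ht.le _ _
  have hreflected : 0 ≤ cosKernel ((x + y) / (2 * L)) (2 * π * t / (2 * L) ^ 2) / (2 * L) :=
    (hasSum_gaussKernel_add_int_mul ht hP (x + y)).nonneg fun n ↦ gaussKernel_nonneg ht.le _ _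
  rw [neumannKernel_eq_cosKernel hL.ne' ht, add_div]
  linarith

/-- For every `t > 0` and `x, y ∈ [0,L]`, the Neumann heat kernel dominates the Gaussian
heat kernel. -/
theorem gaussKernel_le_neumannKernel (L : ℝ) (hL : 0 < L) (t x y : ℝ) (ht : 0 < t)
    (hx : x ∈ Set.Icc (0:ℝ) L) (hy : y ∈ Set.Icc (0:ℝ) L) :
    gaussKernel t x y ≤ neumannKernel L t x y :=
  gaussKernel_le_neumannKernel_general L hL t x y ht
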